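/- arXiv:2004.10551 — 2 statements merged into one kernel-verified Lean document; each statement's English description precedes it below -/
import Mathlib

section
/- Suppose G and its complement Ḡ are both nonempty graphs, with m edges and m̄ edges respectively. Then 2 ≤ vs_{χ'}(G) + vs_{χ'}(Ḡ) ≤ ⌊m/χ'(G)⌋ + ⌊m̄/χ'(Ḡ)⌋. -/
open SimpleGraph

open scoped Classical ENNReal

/-- `H` is (isomorphic to) a subgraph of `G`. -/
def IsSubgraphOf {α β : Type} (H : SimpleGraph α) (G : SimpleGraph β) : Prop :=
  ∃ f : α ↪ β, ∀ u v : α, H.Adj u v → G.Adj (f u) (f v)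

/-- The `ρ`-vertex stability number of `G`: the minimum number of vertices of `G`
whose removal results in a graph `H ⊆ G` with `ρ H ≠ ρ G` or with no edges. -/
noncomputable def vsNum {V : Type} [Fintype V] [DecidableEq V]
    (ρ : ∀ (W : Type) [Fintype W] [DecidableEq W], SimpleGraph W → ℝ≥0∞)
    (G : SimpleGraph V) : ℕ :=
  sInf {n | ∃ S : Finset V, S.card = n ∧
    (ρ _ (G.induce (↑Sᶜ : Set V)) ≠ ρ _ G ∨ (G.induce (↑Sᶜ : Set V)).edgeSet = ∅)}

/-- `ρ` is monotone increasing: `H ⊆ G` implies `ρ H ≤ ρ G`. -/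
def MonotoneIncrInv
    (ρ : ∀ (W : Type) [Fintype W] [DecidableEq W], SimpleGraph W → ℝ≥0∞) : Prop :=
  ∀ (α β : Type) [Fintype α] [DecidableEq α] [Fintype β] [DecidableEq β]
    (H : SimpleGraph α) (G : SimpleGraph β), IsSubgraphOf H G → ρ _ H ≤ ρ _ G

/-- `ρ` is monotone decreasing: `H ⊆ G` implies `ρ H ≥ ρ G`. -/
def MonotoneDecrInv
    (ρ : ∀ (W : Type) [Fintype W] [DecidableEq W], SimpleGraph W → ℝ≥0∞) : Prop :=
  ∀ (α β : Type) [Fintype α] [DecidableEq α] [Fintype β] [DecidableEq β]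
    (H : SimpleGraph α) (G : SimpleGraph β), IsSubgraphOf H G → ρ _ G ≤ ρ _ H

/-- `ρ` is maxing: for disjoint graphs, `ρ (H₁ ∪ H₂) = max (ρ H₁) (ρ H₂)`. -/
def MaxingInv
    (ρ : ∀ (W : Type) [Fintype W] [DecidableEq W], SimpleGraph W → ℝ≥0∞) : Prop :=
  ∀ (α β : Type) [Fintype α] [DecidableEq α] [Fintype β] [DecidableEq β]
    (G : SimpleGraph α) (H : SimpleGraph β), ρ _ (G ⊕g H) = max (ρ _ G) (ρ _ H)

/-- The chromatic index: minimum number of colors in a proper edge coloring. -/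
noncomputable def chromIndex {V : Type} (G : SimpleGraph V) : ℕ :=
  sInf {k | ∃ c : G.edgeSet → Fin k, ∀ e₁ e₂ : G.edgeSet, e₁ ≠ e₂ →
    (∃ v, v ∈ (e₁ : Sym2 V) ∧ v ∈ (e₂ : Sym2 V)) → c e₁ ≠ c e₂}

/-- Maximum degree. -/
noncomputable def maxDeg {V : Type} [Fintype V] (G : SimpleGraph V) : ℕ :=
  Finset.univ.sup fun v => (G.neighborSet v).ncard

/-- Minimum degree. -/
noncomputable def minDeg {V : Type} [Fintype V] (G : SimpleGraph V) : ℕ :=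
  sInf {d | ∃ v, (G.neighborSet v).ncard = d}

/-- The chromatic vertex stability number `vs_{χ'}(G)`. -/
noncomputable def vsChi {V : Type} [Fintype V] [DecidableEq V] (G : SimpleGraph V) : ℕ :=
  if G.edgeSet = ∅ then 0 else
    sInf {n | ∃ S : Finset V, S.card = n ∧
      chromIndex (G.induce (↑Sᶜ : Set V)) ≠ chromIndex G}

/-- The `Δ`-vertex stability number `vs_Δ(G)`. -/
noncomputable def vsDelta {V : Type} [Fintype V] [DecidableEq V] (G : SimpleGraph V) : ℕ :=
  sInf {n | ∃ S : Finset V, S.card = n ∧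
    (maxDeg (G.induce (↑Sᶜ : Set V)) ≠ maxDeg G ∨ (G.induce (↑Sᶜ : Set V)).edgeSet = ∅)}

/-- The `δ`-vertex stability number `vs_δ(G)`. -/
noncomputable def vsMinDeg {V : Type} [Fintype V] [DecidableEq V] (G : SimpleGraph V) : ℕ :=
  sInf {n | ∃ S : Finset V, S.card = n ∧
    (minDeg (G.induce (↑Sᶜ : Set V)) ≠ minDeg G ∨ (G.induce (↑Sᶜ : Set V)).edgeSet = ∅)}

/-- `class G = χ'(G) - Δ(G) + 1 ∈ {1,2}`. -/
noncomputable def classInv {V : Type} [Fintype V] (G : SimpleGraph V) : ℕ :=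
  chromIndex G - maxDeg G + 1

/-- The `class`-vertex stability number. -/
noncomputable def vsClass {V : Type} [Fintype V] [DecidableEq V] (G : SimpleGraph V) : ℕ :=
  sInf {n | ∃ S : Finset V, S.card = n ∧
    (classInv (G.induce (↑Sᶜ : Set V)) ≠ classInv G ∨ (G.induce (↑Sᶜ : Set V)).edgeSet = ∅)}

/-- Number of connected components. -/
noncomputable def numComponents {V : Type} (G : SimpleGraph V) : ℕ :=
  Nat.card G.ConnectedComponent

/-- The `ω`-vertex stability number (ω = number of components). -/
noncomputable def vsOmega {V : Type} [Fintype V] [DecidableEq V] (G : SimpleGraph V) : ℕ :=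
  sInf {n | ∃ S : Finset V, S.card = n ∧
    (numComponents (G.induce (↑Sᶜ : Set V)) ≠ numComponents G ∨
      (G.induce (↑Sᶜ : Set V)).edgeSet = ∅)}

/-- Vertex connectivity: minimum number of vertices whose removal yields a graph that is
not connected, or the single-vertex graph `K₁`. -/
noncomputable def kappa {V : Type} [Fintype V] [DecidableEq V] (G : SimpleGraph V) : ℕ :=
  sInf {n | ∃ S : Finset V, S.card = n ∧
    (¬ (G.induce (↑Sᶜ : Set V)).Connected ∨ Fintype.card ↥(↑Sᶜ : Set V) = 1)}

/-- `γ(V_Δ)`: minimum size of a set `Γ` of vertices such that every vertex of maximum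
degree has a neighbor in `Γ`. -/
noncomputable def gammaMaxDeg {V : Type} [Fintype V] [DecidableEq V] (G : SimpleGraph V) : ℕ :=
  sInf {n | ∃ Γ : Finset V, Γ.card = n ∧
    ∀ v : V, (G.neighborSet v).ncard = maxDeg G → ∃ u ∈ Γ, G.Adj u v}

/-- The wheel graph `W n`: cycle `C n` joined with one extra vertex. -/
def wheelGraph (n : ℕ) : SimpleGraph (Option (Fin n)) :=
  SimpleGraph.fromRel (fun x y =>
    match x, y with
    | none, some _ => True
    | some i, some j => (j : ℕ) = ((i : ℕ) + 1) % n
    | _, _ => False)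

lemma chromIndex_set_nonempty {V : Type} [Finite V] (G : SimpleGraph V) :
    {k | ∃ c : G.edgeSet → Fin k, ∀ e₁ e₂ : G.edgeSet, e₁ ≠ e₂ →
      (∃ v, v ∈ (e₁ : Sym2 V) ∧ v ∈ (e₂ : Sym2 V)) → c e₁ ≠ c e₂}.Nonempty := by
  obtain ⟨n, ⟨eqv⟩⟩ := Finite.exists_equiv_fin G.edgeSet
  exact ⟨n, eqv, fun e₁ e₂ hne _ h => hne (eqv.injective h)⟩

lemma chromIndex_pos {V : Type} [Finite V] (G : SimpleGraph V) (hG : G.edgeSet ≠ ∅) :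
    1 ≤ chromIndex G := by
  rw [Nat.one_le_iff_ne_zero, chromIndex, Ne, Nat.sInf_eq_zero]
  rintro (⟨c, -⟩ | h)
  · obtain ⟨e, he⟩ := Set.nonempty_iff_ne_empty.2 hG
    exact (c ⟨e, he⟩).elim0
  · exact Set.not_nonempty_empty (h ▸ chromIndex_set_nonempty G)

lemma chromIndex_le_of_iso {α β : Type} [Finite β] {G : SimpleGraph α} {H : SimpleGraph β}
    (f : G ≃g H) : chromIndex G ≤ chromIndex H := by
  have hmem := Nat.sInf_mem (chromIndex_set_nonempty H)
  obtain ⟨c, hc⟩ := hmem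
  apply Nat.sInf_le
  refine ⟨fun e => c (f.mapEdgeSet e), fun e₁ e₂ hne hsh h => ?_⟩
  refine hc _ _ (fun heq => hne (f.mapEdgeSet.injective heq)) ?_ h
  obtain ⟨v, hv₁, hv₂⟩ := hsh
  exact ⟨f v, Sym2.mem_map.2 ⟨v, hv₁, rfl⟩, Sym2.mem_map.2 ⟨v, hv₂, rfl⟩⟩

lemma chromIndex_iso {α β : Type} [Finite α] [Finite β] {G : SimpleGraph α} {H : SimpleGraph β}
    (f : G ≃g H) : chromIndex G = chromIndex H :=
  le_antisymm (chromIndex_le_of_iso f) (chromIndex_le_of_iso f.symm)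

lemma remove_color {E : Type} {k : ℕ} (c : E → Fin (k+1)) (i : Fin (k+1))
    (R : E → E → Prop) (hc : ∀ e₁ e₂, R e₁ e₂ → c e₁ ≠ c e₂) (hne : ∀ e, c e ≠ i) :
    ∃ c' : E → Fin k, ∀ e₁ e₂, R e₁ e₂ → c' e₁ ≠ c' e₂ := by
  have hsome : ∀ e, (finSuccEquiv' i (c e)).isSome := by
    intro e
    rw [← Option.ne_none_iff_isSome]
    intro h
    exact hne e (by simpa using (finSuccEquiv' i).injective (h.trans (finSuccEquiv'_at i).symm))
  refine ⟨fun e => (finSuccEquiv' i (c e)).get (hsome e), fun e₁ e₂ hr h => ?_⟩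
  apply hc e₁ e₂ hr
  apply (finSuccEquiv' i).injective
  simp only at h
  rw [← Option.some_get (hsome e₁), ← Option.some_get (hsome e₂), h]

lemma vsChi_pos {V : Type} [Fintype V] [DecidableEq V] (G : SimpleGraph V)
    (hG : G.edgeSet ≠ ∅) : 1 ≤ vsChi G := by
  rw [vsChi, if_neg hG, Nat.one_le_iff_ne_zero, Ne, Nat.sInf_eq_zero]
  rintro (⟨S, hS, hne⟩ | hempty)
  · rw [Finset.card_eq_zero] at hS
    subst hS
    have hset : (↑((∅ : Finset V)ᶜ) : Set V) = Set.univ := by simp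
    rw [hset] at hne
    exact hne (chromIndex_iso (induceUnivIso G))
  · have h0 : chromIndex (G.induce (↑((Finset.univ : Finset V)ᶜ) : Set V)) = 0 := by
      apply Nat.eq_zero_of_le_zero
      apply Nat.sInf_le
      have helim : ∀ e : (G.induce (↑((Finset.univ : Finset V)ᶜ) : Set V)).edgeSet, False := by
        intro e
        obtain ⟨v, -⟩ : ∃ v, v ∈ e.1 := by
          induction e.1 using Sym2.ind with
          | _ x y => exact ⟨x, Sym2.mem_mk_left x y⟩
        simpa using v.2
      exact ⟨fun e => (helim e).elim, fun e₁ _ _ _ => (helim e₁).elim⟩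
    have h1 : 1 ≤ chromIndex G := chromIndex_pos G hG
    exact Set.eq_empty_iff_forall_notMem.1 hempty _
      ⟨Finset.univ, rfl, by rw [h0]; omega⟩

lemma vsChi_le_div {V : Type} [Fintype V] [DecidableEq V] (G : SimpleGraph V)
    (hG : G.edgeSet ≠ ∅) : vsChi G ≤ G.edgeSet.ncard / chromIndex G := by
  classical
  have hk : 1 ≤ chromIndex G := chromIndex_pos G hG
  obtain ⟨k', hk'⟩ : ∃ k', chromIndex G = k' + 1 :=
    ⟨chromIndex G - 1, (Nat.succ_pred_eq_of_pos hk).symm⟩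
  haveI : Fintype G.edgeSet := Fintype.ofFinite _
  set m := Fintype.card G.edgeSet with hm
  have hmem : chromIndex G ∈ {k | ∃ c : G.edgeSet → Fin k,
      ∀ e₁ e₂ : G.edgeSet, e₁ ≠ e₂ →
        (∃ v, v ∈ (e₁ : Sym2 V) ∧ v ∈ (e₂ : Sym2 V)) → c e₁ ≠ c e₂} :=
    Nat.sInf_mem (chromIndex_set_nonempty G)
  obtain ⟨c₀, hc₀⟩ := hmem
  set c : G.edgeSet → Fin (k' + 1) := fun e => Fin.cast hk' (c₀ e) with hcdef
  have hc : ∀ e₁ e₂ : G.edgeSet, e₁ ≠ e₂ →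
      (∃ v, v ∈ (e₁ : Sym2 V) ∧ v ∈ (e₂ : Sym2 V)) → c e₁ ≠ c e₂ := by
    intro e₁ e₂ hne hsh heq
    exact hc₀ e₁ e₂ hne hsh (Fin.cast_injective hk' heq)
  -- pigeonhole
  have hsum : m = ∑ i : Fin (k' + 1), (Finset.univ.filter fun e => c e = i).card := by
    rw [hm, ← Finset.card_univ]
    exact Finset.card_eq_sum_card_fiberwise fun e _ => Finset.mem_univ (c e)
  obtain ⟨i, hi⟩ : ∃ i : Fin (k' + 1),
      (Finset.univ.filter fun e => c e = i).card ≤ m / (k' + 1) := by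
    by_contra hno
    push_neg at hno
    have h1 : (k' + 1) * (m / (k' + 1) + 1) ≤
        ∑ i : Fin (k' + 1), (Finset.univ.filter fun e => c e = i).card := by
      calc (k' + 1) * (m / (k' + 1) + 1)
          = ∑ _i : Fin (k' + 1), (m / (k' + 1) + 1) := by
            simp [Finset.sum_const, Finset.card_univ, mul_comm]
        _ ≤ _ := Finset.sum_le_sum fun i _ => hno i
    rw [← hsum, Nat.mul_succ] at h1
    have h2 := Nat.div_add_mod m (k' + 1)
    have h3 : m % (k' + 1) < k' + 1 := Nat.mod_lt m (Nat.succ_pos k')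
    omega
  -- pick one endpoint of each edge of color i
  have hpickex : ∀ z : Sym2 V, ∃ v, v ∈ z := by
    intro z
    induction z using Sym2.ind with
    | _ x y => exact ⟨x, Sym2.mem_mk_left x y⟩
  set pick : Sym2 V → V := fun z => Classical.choose (hpickex z) with hpickdef
  have hpick : ∀ z, pick z ∈ z := fun z => Classical.choose_spec (hpickex z)
  set S : Finset V :=
    (Finset.univ.filter fun e : G.edgeSet => c e = i).image
      (fun e : G.edgeSet => pick (e : Sym2 V)) with hSdef
  have hScard : S.card ≤ m / (k' + 1) := le_trans Finset.card_image_le hi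
  set φ : G.induce (↑Sᶜ : Set V) ↪g G := SimpleGraph.Embedding.induce (↑Sᶜ : Set V)
  have hnei : ∀ e' : (G.induce (↑Sᶜ : Set V)).edgeSet, c (φ.mapEdgeSet e') ≠ i := by
    intro e' heq
    have hmemS : pick ↑(φ.mapEdgeSet e') ∈ S :=
      Finset.mem_image.2 ⟨φ.mapEdgeSet e',
        Finset.mem_filter.2 ⟨Finset.mem_univ _, heq⟩, rfl⟩
    have hcoe : (↑(φ.mapEdgeSet e') : Sym2 V)
        = Sym2.map (Subtype.val : (↑Sᶜ : Set V) → V) e'.1 := rfl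
    have hmm : pick ↑(φ.mapEdgeSet e') ∈ Sym2.map (Subtype.val : (↑Sᶜ : Set V) → V) e'.1 := by
      rw [← hcoe]; exact hpick _
    obtain ⟨a, -, ha⟩ := Sym2.mem_map.1 hmm
    have hanS : (a : V) ∉ S := by simpa using a.2
    exact hanS (ha ▸ hmemS)
  have hcolH : chromIndex (G.induce (↑Sᶜ : Set V)) ≤ k' := by
    obtain ⟨c', hc'⟩ := remove_color (fun e' => c (φ.mapEdgeSet e')) i
      (fun e₁ e₂ : (G.induce (↑Sᶜ : Set V)).edgeSet =>
        e₁ ≠ e₂ ∧ ∃ v, v ∈ e₁.1 ∧ v ∈ e₂.1)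
      (by
        rintro e₁ e₂ ⟨hne, v, hv₁, hv₂⟩
        refine hc _ _ (fun h => hne (φ.mapEdgeSet.injective h)) ?_
        exact ⟨φ v, Sym2.mem_map.2 ⟨v, hv₁, rfl⟩, Sym2.mem_map.2 ⟨v, hv₂, rfl⟩⟩)
      hnei
    exact Nat.sInf_le ⟨c', fun e₁ e₂ hne hsh => hc' e₁ e₂ ⟨hne, hsh⟩⟩
  have hfin : chromIndex (G.induce (↑Sᶜ : Set V)) ≠ chromIndex G := by omega
  rw [vsChi, if_neg hG]
  calc sInf {n | ∃ S : Finset V, S.card = n ∧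
        chromIndex (G.induce (↑Sᶜ : Set V)) ≠ chromIndex G}
      ≤ S.card := Nat.sInf_le ⟨S, rfl, hfin⟩
    _ ≤ m / (k' + 1) := hScard
    _ = G.edgeSet.ncard / chromIndex G := by
        rw [hk', hm, ← Nat.card_eq_fintype_card, Nat.card_coe_set_eq]

/-- if `G` and its complement are nonempty with `m` and `m̄` edges, then
`2 ≤ vs_{χ'}(G) + vs_{χ'}(Ḡ) ≤ ⌊m/χ'(G)⌋ + ⌊m̄/χ'(Ḡ)⌋`. -/
theorem vs_nordhaus_gaddum {V : Type} [Fintype V] [DecidableEq V] (G : SimpleGraph V)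
    (hG : G.edgeSet ≠ ∅) (hGc : Gᶜ.edgeSet ≠ ∅) :
    2 ≤ vsChi G + vsChi Gᶜ ∧
      vsChi G + vsChi Gᶜ ≤
        G.edgeSet.ncard / chromIndex G + Gᶜ.edgeSet.ncard / chromIndex Gᶜ := by
  constructor
  · have h1 := vsChi_pos G hG
    have h2 := vsChi_pos Gᶜ hGc
    omega
  · exact Nat.add_le_add (vsChi_le_div G hG) (vsChi_le_div Gᶜ hGc)
end

section
/- For every positive integer k there exists a graph G with vs_{χ'}(G) = k. -/
open SimpleGraph

open scoped Classical ENNReal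

lemma aux_chromIndex_eq_zero {W : Type} (H : SimpleGraph W) (h : H.edgeSet = ∅) :
    chromIndex H = 0 := by
  apply Nat.sInf_eq_zero.mpr
  left
  refine ⟨fun e => (Set.eq_empty_iff_forall_notMem.mp h e.1 e.2).elim, ?_⟩
  intro e₁ _ _ _
  exact (Set.eq_empty_iff_forall_notMem.mp h e₁.1 e₁.2).elim

lemma aux_matching_chromIndex {W : Type} (H : SimpleGraph W)
    (hm : ∀ a b c : W, H.Adj a b → H.Adj a c → b = c)
    (hne : H.edgeSet ≠ ∅) : chromIndex H = 1 := by
  have h1 : 1 ∈ {k | ∃ c : H.edgeSet → Fin k, ∀ e₁ e₂ : H.edgeSet, e₁ ≠ e₂ →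
      (∃ v, v ∈ (e₁ : Sym2 W) ∧ v ∈ (e₂ : Sym2 W)) → c e₁ ≠ c e₂} := by
    refine ⟨fun _ => 0, ?_⟩
    rintro e₁ e₂ hne' ⟨v, hv1, hv2⟩
    exfalso
    obtain ⟨b₁, hb₁⟩ := Sym2.mem_iff_exists.mp hv1
    obtain ⟨b₂, hb₂⟩ := Sym2.mem_iff_exists.mp hv2
    have a1 : H.Adj v b₁ := by rw [← H.mem_edgeSet, ← hb₁]; exact e₁.2
    have a2 : H.Adj v b₂ := by rw [← H.mem_edgeSet, ← hb₂]; exact e₂.2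
    exact hne' (Subtype.ext (by rw [hb₁, hb₂, hm v b₁ b₂ a1 a2]))
  have hle : chromIndex H ≤ 1 := Nat.sInf_le h1
  have hne0 : chromIndex H ≠ 0 := by
    intro h0
    have hmem := Nat.sInf_mem (⟨1, h1⟩ : Set.Nonempty _)
    rw [show sInf _ = chromIndex H from rfl, h0] at hmem
    obtain ⟨c, -⟩ := hmem
    obtain ⟨e, he⟩ := Set.nonempty_iff_ne_empty.mpr hne
    exact (c ⟨e, he⟩).elim0
  omega

/-- for every `k ≥ 1` there is a graph `G` with `vs_{χ'}(G) = k`. -/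
theorem exists_graph_vsChi_eq (k : ℕ) (hk : 1 ≤ k) :
    ∃ (n : ℕ) (G : SimpleGraph (Fin n)), vsChi G = k := by
  refine ⟨2 * k, ⟨fun i j => i ≠ j ∧ (i : ℕ) / 2 = (j : ℕ) / 2,
    ⟨fun i j h => ⟨h.1.symm, h.2.symm⟩⟩, ⟨fun i h => h.1 rfl⟩⟩, ?_⟩
  set G : SimpleGraph (Fin (2 * k)) := ⟨fun i j => i ≠ j ∧ (i : ℕ) / 2 = (j : ℕ) / 2,
    ⟨fun i j h => ⟨h.1.symm, h.2.symm⟩⟩, ⟨fun i h => h.1 rfl⟩⟩ with hGdef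
  have hadj : ∀ i j : Fin (2 * k), G.Adj i j ↔ i ≠ j ∧ (i : ℕ) / 2 = (j : ℕ) / 2 :=
    fun i j => Iff.rfl
  have hind : ∀ (s : Set (Fin (2 * k))) (u v : s), (G.induce s).Adj u v ↔ G.Adj ↑u ↑v := by
    intro s u v; simp [comap_adj]
  -- G is a matching
  have hmatch : ∀ a b c : Fin (2 * k), G.Adj a b → G.Adj a c → b = c := by
    intro a b c hab hac
    have h1 : (a : ℕ) ≠ (b : ℕ) := fun h => hab.1 (Fin.ext h)
    have h2 : (a : ℕ) ≠ (c : ℕ) := fun h => hac.1 (Fin.ext h)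
    have := hab.2; have := hac.2
    exact Fin.ext (by omega)
  -- induced subgraphs of G are matchings
  have hmatch' : ∀ s : Set (Fin (2 * k)), ∀ a b c : s,
      (G.induce s).Adj a b → (G.induce s).Adj a c → b = c := by
    intro s a b c hab hac
    exact Subtype.ext (hmatch a b c hab hac)
  -- G has an edge
  have h01 : G.Adj ⟨0, by omega⟩ ⟨1, by omega⟩ := by
    refine ⟨?_, by simp⟩
    intro h
    have := congrArg Fin.val h
    simp at this
  have hGne : G.edgeSet ≠ ∅ := fun h =>
    Set.eq_empty_iff_forall_notMem.mp h _ (G.mem_edgeSet.mpr h01)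
  have hG1 : chromIndex G = 1 := aux_matching_chromIndex G hmatch hGne
  -- key equivalence
  have hkey : ∀ S : Finset (Fin (2 * k)),
      chromIndex (G.induce (↑Sᶜ : Set (Fin (2 * k)))) ≠ chromIndex G ↔
      (G.induce (↑Sᶜ : Set (Fin (2 * k)))).edgeSet = ∅ := by
    intro S
    constructor
    · intro h
      by_contra hne
      exact h ((aux_matching_chromIndex _ (hmatch' _) hne).trans hG1.symm)
    · intro h
      rw [aux_chromIndex_eq_zero _ h, hG1]
      exact zero_ne_one
  rw [vsChi, if_neg hGne]
  -- the witness set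
  have hkmem : k ∈ {n | ∃ S : Finset (Fin (2 * k)), S.card = n ∧
      chromIndex (G.induce (↑Sᶜ : Set (Fin (2 * k)))) ≠ chromIndex G} := by
    refine ⟨Finset.image (fun m : Fin k => (⟨2 * m.val, by omega⟩ : Fin (2 * k)))
      Finset.univ, ?_, ?_⟩
    · rw [Finset.card_image_of_injective _ (fun m₁ m₂ h => by
        have := congrArg Fin.val h; simp at this; exact Fin.ext this)]
      simp
    · rw [hkey]
      rw [SimpleGraph.edgeSet_eq_empty]
      ext u v
      simp only [SimpleGraph.bot_adj, iff_false]
      intro huv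
      replace huv := (hind _ u v).mp huv
      have hu : (u : Fin (2 * k)) ∉ Finset.image
          (fun m : Fin k => (⟨2 * m.val, by omega⟩ : Fin (2 * k))) Finset.univ := by
        have := u.2; simpa using this
      have hv : (v : Fin (2 * k)) ∉ Finset.image
          (fun m : Fin k => (⟨2 * m.val, by omega⟩ : Fin (2 * k))) Finset.univ := by
        have := v.2; simpa using this
      have hne' : ((u : Fin (2 * k)) : ℕ) ≠ ((v : Fin (2 * k)) : ℕ) :=
        fun h => huv.1 (Fin.ext h)
      have hdiv : ((u : Fin (2 * k)) : ℕ) / 2 = ((v : Fin (2 * k)) : ℕ) / 2 := huv.2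
      -- one of u, v is even, hence in the image
      have hub := (u : Fin (2 * k)).2
      have hvb := (v : Fin (2 * k)).2
      rcases Nat.even_or_odd ((u : Fin (2 * k)) : ℕ) with he | ho
      · obtain ⟨m, hm⟩ := he
        apply hu
        simp only [Finset.mem_image, Finset.mem_univ, true_and]
        exact ⟨⟨m, by omega⟩, Fin.ext (by simp; omega)⟩
      · have hve : ((v : Fin (2 * k)) : ℕ) % 2 = 0 := by
          rcases Nat.odd_iff.mp ho with h; omega
        apply hv
        simp only [Finset.mem_image, Finset.mem_univ, true_and]
        exact ⟨⟨((v : Fin (2 * k)) : ℕ) / 2, by omega⟩, Fin.ext (by simp; omega)⟩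
  -- lower bound
  have hlb : ∀ n ∈ {n | ∃ S : Finset (Fin (2 * k)), S.card = n ∧
      chromIndex (G.induce (↑Sᶜ : Set (Fin (2 * k)))) ≠ chromIndex G}, k ≤ n := by
    rintro n ⟨S, hcard, hne'⟩
    rw [hkey] at hne'
    by_contra hlt
    push_neg at hlt
    -- pigeonhole: some pair {2m, 2m+1} misses S
    set T := S.image (fun i : Fin (2 * k) => (i : ℕ) / 2) with hT
    have hTcard : T.card < k := lt_of_le_of_lt (Finset.card_image_le) (by omega)
    have hTsub : T ⊆ Finset.range k := by
      intro m hm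
      simp only [hT, Finset.mem_image] at hm
      obtain ⟨i, -, hi⟩ := hm
      have := i.2
      simp only [Finset.mem_range]
      omega
    have : ∃ m < k, m ∉ T := by
      by_contra hall
      push_neg at hall
      have : Finset.range k ⊆ T := fun m hm => hall m (Finset.mem_range.mp hm)
      have := Finset.card_le_card this
      simp at this
      omega
    obtain ⟨m, hmk, hmT⟩ := this
    have haS : (⟨2 * m, by omega⟩ : Fin (2 * k)) ∉ S := by
      intro h
      exact hmT (Finset.mem_image.mpr ⟨_, h, by show 2 * m / 2 = m; omega⟩)
    have hbS : (⟨2 * m + 1, by omega⟩ : Fin (2 * k)) ∉ S := by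
      intro h
      exact hmT (Finset.mem_image.mpr ⟨_, h, by show (2 * m + 1) / 2 = m; omega⟩)
    have haC : (⟨2 * m, by omega⟩ : Fin (2 * k)) ∈ (↑Sᶜ : Set (Fin (2 * k))) := by
      simpa using haS
    have hbC : (⟨2 * m + 1, by omega⟩ : Fin (2 * k)) ∈ (↑Sᶜ : Set (Fin (2 * k))) := by
      simpa using hbS
    have hadj' : (G.induce (↑Sᶜ : Set (Fin (2 * k)))).Adj ⟨_, haC⟩ ⟨_, hbC⟩ := by
      rw [hind]
      refine ⟨?_, by show 2 * m / 2 = (2 * m + 1) / 2; omega⟩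
      intro h
      have := congrArg Fin.val h
      simp at this
    exact Set.eq_empty_iff_forall_notMem.mp hne' _
      ((G.induce (↑Sᶜ : Set (Fin (2 * k)))).mem_edgeSet.mpr hadj')
  refine le_antisymm (Nat.sInf_le hkmem) (hlb _ (Nat.sInf_mem ⟨k, hkmem⟩))
end
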